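/- Let β > 1 be a non-integer and let (w_n)_{n≥1} be a sequence of integers with w_n ∈ {0, 1, …, ⌊β⌋} for all n. Then there exists x₀ ∈ [0,1) such that w_n = a_n(β,x₀) for all n ≥ 1 if and only if for every integer i ≥ 0 the shifted sequence (w_{i+n})_{n≥1} is strictly smaller than (d_n(β,1))_{n≥1} in the lexicographic order. -/

import Mathlib

open scoped BigOperators

/-- The beta-map `x ↦ βx - ⌊βx⌋`. -/
noncomputable def tau (β x : ℝ) : ℝ := β * x - ⌊β * x⌋

/-- Greedy digit `a_n(β,x) = ⌊β·τ_β^{n-1}(x)⌋` (meaningful for `n ≥ 1`). -/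
noncomputable def dig (β x : ℝ) (n : ℕ) : ℤ := ⌊β * (tau β)^[n - 1] x⌋

/-- `x` is a simple point for `β`: some `τ_β^{n-1}(x)` lies in `{1/β, …, ⌊β⌋/β}`. -/
def IsSimplePt (β x : ℝ) : Prop :=
  ∃ n : ℕ, 1 ≤ n ∧ ∃ k : ℕ, 1 ≤ k ∧ (k : ℤ) ≤ ⌊β⌋ ∧ (tau β)^[n - 1] x = (k : ℝ) / β

/-- `L(x)`: the least `n ≥ 1` with `τ_β^{n-1}(x) ∈ {1/β, …, ⌊β⌋/β}`. -/
noncomputable def Lpt (β x : ℝ) : ℕ :=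
  sInf {n : ℕ | 1 ≤ n ∧ ∃ k : ℕ, 1 ≤ k ∧ (k : ℤ) ≤ ⌊β⌋ ∧ (tau β)^[n - 1] x = (k : ℝ) / β}

/-- `β` is simple if `x = 1` is a simple point for `β`. -/
def IsSimpleBeta (β : ℝ) : Prop := IsSimplePt β 1

open Classical in
/-- Quasi-greedy digit `d_n(β,1)` (meaningful for `n ≥ 1`): if `β` is simple with `L = L(1)`,
the periodic sequence repeating the block `(a_1, …, a_{L-1}, a_L - 1)`; otherwise `a_n(β,1)`. -/
noncomputable def qdig (β : ℝ) (n : ℕ) : ℤ :=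
  if IsSimpleBeta β then
    (if (n - 1) % Lpt β 1 = Lpt β 1 - 1 then dig β 1 (Lpt β 1) - 1
     else dig β 1 ((n - 1) % Lpt β 1 + 1))
  else dig β 1 n

/-- `φ_β(z) = Σ_{n≥1} a_n(β,1) β^{-n} z^n`. -/
noncomputable def phi (β : ℝ) (z : ℂ) : ℂ :=
  ∑' n : ℕ, (dig β 1 (n + 1) : ℂ) * (z / (β : ℂ)) ^ (n + 1)

/-- `φ̂_β(z) = Σ_{n≥1} d_n(β,1) β^{-n} z^n`. -/
noncomputable def phiHat (β : ℝ) (z : ℂ) : ℂ :=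
  ∑' n : ℕ, (qdig β (n + 1) : ℂ) * (z / (β : ℂ)) ^ (n + 1)

/-- `ψ_β(z) = 1 + Σ_{n≥1} τ_β^n(1) β^{-n} z^n`. -/
noncomputable def psi (β : ℝ) (z : ℂ) : ℂ :=
  1 + ∑' n : ℕ, (((tau β)^[n + 1] 1 : ℝ) : ℂ) * (z / (β : ℂ)) ^ (n + 1)

/-- `F_λ(x) = Σ_{n≥1} a_n(β,x)/(βλ)^n`. -/
noncomputable def Ffun (β : ℝ) (lam : ℂ) (x : ℝ) : ℂ :=
  ∑' n : ℕ, (dig β x (n + 1) : ℂ) / ((β : ℂ) * lam) ^ (n + 1)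

/-!
Write `T_i(u) = Σ_{n≥1} u_{i+n} β^{-n}` (`tailSum β u i`) for the value of the `i`-th shift of a
digit sequence `u`. These values satisfy `β T_i = u_{i+1} + T_{i+1}`, and since `β > 1` this
recurrence has at most one bounded solution. Hence the shifts of the greedy expansion of `x` have
values `τ^i x ∈ [0, 1)`, while those of `(d_n)` have values `τ^r 1 ∈ (0, 1]`, equal to `1` for
`i = 0`. If two digit sequences first differ at place `m`, the value of the larger one exceeds the
other by at least `β^{-m}` times `1 + T_m(larger) - T_m(smaller)`, which turns lexicographic
comparisons with `(d_n)` into comparisons of values with `1`. Conversely, if every shift of `w` is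
lexicographically below `(d_n)`, then `T_i(w) - 1 < β^{-m} (T_{i+m}(w) - 1)` for some `m ≥ 1`;
this forces `sup_i T_i(w) ≤ 1` and then `T_i(w) < 1` for every `i`, so `w` is the greedy expansion
of `T_0(w)`.
-/

open Set

section Tau
variable {β : ℝ}

lemma tau_mem_Ico (x : ℝ) : tau β x ∈ Ico 0 1 := ⟨Int.fract_nonneg _, Int.fract_lt_one _⟩

lemma iterate_tau_mem_Icc {x : ℝ} (hx : x ∈ Icc 0 1) (n : ℕ) : (tau β)^[n] x ∈ Icc 0 1 := by
  cases n with
  | zero => exact hx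
  | succ n =>
    rw [Function.iterate_succ_apply']
    exact Ico_subset_Icc_self (tau_mem_Ico _)

lemma iterate_tau_lt_one {x : ℝ} (hx : x < 1) (n : ℕ) : (tau β)^[n] x < 1 := by
  cases n with
  | zero => exact hx
  | succ n =>
    rw [Function.iterate_succ_apply']
    exact (tau_mem_Ico _).2

lemma mul_iterate_tau (x : ℝ) (i : ℕ) :
    β * (tau β)^[i] x = dig β x (i + 1) + (tau β)^[i + 1] x := by
  rw [Function.iterate_succ_apply', dig, Nat.add_sub_cancel, tau]
  ring

lemma dig_eq_of_iterate_eq_div (hβ : β ≠ 0) {x : ℝ} {n k : ℕ}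
    (h : (tau β)^[n - 1] x = k / β) : dig β x n = k := by
  rw [dig, h, mul_div_cancel₀ _ hβ, Int.floor_natCast]

end Tau

def IsDigitSeq (β : ℝ) (u : ℕ → ℤ) : Prop := ∀ n, 1 ≤ n → 0 ≤ u n ∧ u n ≤ ⌊β⌋

lemma isDigitSeq_dig {β x : ℝ} (hβ : 0 ≤ β) (hx : x ∈ Icc 0 1) : IsDigitSeq β (dig β x) := by
  intro n _
  have hy := iterate_tau_mem_Icc (β := β) hx (n - 1)
  exact ⟨Int.floor_nonneg.2 (mul_nonneg hβ hy.1),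
    Int.floor_le_floor (mul_le_of_le_one_right hβ hy.2)⟩

noncomputable def tailSum (β : ℝ) (u : ℕ → ℤ) (i : ℕ) : ℝ :=
  ∑' n : ℕ, (u (i + (n + 1)) : ℝ) / β ^ (n + 1)

section TailSum
variable {β : ℝ} {u v : ℕ → ℤ}

lemma tailSum_term_mem_Icc (hβ : 1 < β) (hu : IsDigitSeq β u) (i n : ℕ) :
    (u (i + (n + 1)) : ℝ) / β ^ (n + 1) ∈ Icc 0 (β⁻¹ ^ n) := by
  obtain ⟨h0, h1⟩ := hu (i + (n + 1)) (by omega)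
  have hβ0 : 0 < β := by linarith
  refine ⟨by positivity, ?_⟩
  calc (u (i + (n + 1)) : ℝ) / β ^ (n + 1) ≤ β / β ^ (n + 1) := by
        gcongr
        exact (Int.cast_le.2 h1).trans (Int.floor_le β)
    _ = β⁻¹ ^ n := by
        rw [pow_succ', div_mul_cancel_left₀ hβ0.ne', inv_pow]

lemma summable_tailSum (hβ : 1 < β) (hu : IsDigitSeq β u) (i : ℕ) :
    Summable fun n : ℕ ↦ (u (i + (n + 1)) : ℝ) / β ^ (n + 1) :=
  Summable.of_nonneg_of_le (fun n ↦ (tailSum_term_mem_Icc hβ hu i n).1)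
    (fun n ↦ (tailSum_term_mem_Icc hβ hu i n).2)
    (summable_geometric_of_lt_one (by positivity) (inv_lt_one_of_one_lt₀ hβ))

lemma tailSum_mem_Icc (hβ : 1 < β) (hu : IsDigitSeq β u) (i : ℕ) :
    tailSum β u i ∈ Icc 0 (1 - β⁻¹)⁻¹ := by
  have hβ0 : 0 < β := by linarith
  refine ⟨tsum_nonneg fun n ↦ (tailSum_term_mem_Icc hβ hu i n).1, ?_⟩
  rw [← tsum_geometric_of_lt_one (by positivity) (inv_lt_one_of_one_lt₀ hβ)]
  exact (summable_tailSum hβ hu i).tsum_le_tsum (fun n ↦ (tailSum_term_mem_Icc hβ hu i n).2)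
    (summable_geometric_of_lt_one (by positivity) (inv_lt_one_of_one_lt₀ hβ))

lemma mul_tailSum (hβ : 1 < β) (hu : IsDigitSeq β u) (i : ℕ) :
    β * tailSum β u i = u (i + 1) + tailSum β u (i + 1) := by
  have hβ0 : β ≠ 0 := by positivity
  have hshift : ∀ n : ℕ, (u (i + (n + 1 + 1)) : ℝ) / β ^ (n + 1 + 1)
      = (u (i + 1 + (n + 1)) : ℝ) / β ^ (n + 1) / β := by
    intro n
    rw [show i + (n + 1 + 1) = i + 1 + (n + 1) by omega, pow_succ, div_div]
  rw [tailSum, (summable_tailSum hβ hu i).tsum_eq_zero_add]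
  simp only [hshift, tsum_div_const]
  rw [tailSum]
  field_simp
  ring

lemma tailSum_congr {i j : ℕ} (h : ∀ n, 1 ≤ n → u (i + n) = v (j + n)) :
    tailSum β u i = tailSum β v j :=
  tsum_congr fun n ↦ by rw [h (n + 1) (by omega)]

lemma tailSum_sub_tailSum_of_eq (hβ : 1 < β) (hu : IsDigitSeq β u) (hv : IsDigitSeq β v)
    {i j m : ℕ} (h : ∀ n, 1 ≤ n → n ≤ m → u (i + n) = v (j + n)) :
    tailSum β v j - tailSum β u i = (tailSum β v (j + m) - tailSum β u (i + m)) / β ^ m := by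
  induction m with
  | zero => simp
  | succ m ih =>
    have hβ0 : 0 < β := by linarith
    have hum := mul_tailSum hβ hu (i + m)
    have hvm := mul_tailSum hβ hv (j + m)
    have hm : (u (i + m + 1) : ℝ) = v (j + m + 1) := by exact_mod_cast h (m + 1) (by omega) le_rfl
    have hstep : tailSum β v (j + m + 1) - tailSum β u (i + m + 1)
        = β * (tailSum β v (j + m) - tailSum β u (i + m)) := by linarith
    rw [ih fun n h1 h2 ↦ h n h1 (by omega), ← add_assoc, ← add_assoc, hstep, pow_succ']
    field_simp

lemma div_pow_le_tailSum_sub_of_lt (hβ : 1 < β) (hu : IsDigitSeq β u) (hv : IsDigitSeq β v)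
    {i j m : ℕ} (hm : 1 ≤ m) (heq : ∀ n, 1 ≤ n → n < m → u (i + n) = v (j + n))
    (hlt : u (i + m) < v (j + m)) :
    (1 + tailSum β v (j + m) - tailSum β u (i + m)) / β ^ m ≤ tailSum β v j - tailSum β u i := by
  obtain ⟨k, rfl⟩ : ∃ k, m = k + 1 := ⟨m - 1, by omega⟩
  have hβ0 : 0 < β := by linarith
  have huk := mul_tailSum hβ hu (i + k)
  have hvk := mul_tailSum hβ hv (j + k)
  have hlt' : (u (i + k + 1) : ℝ) + 1 ≤ v (j + k + 1) := by exact_mod_cast hlt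
  rw [tailSum_sub_tailSum_of_eq hβ hu hv (m := k) fun n h1 h2 ↦ heq n h1 (by omega)]
  rw [← add_assoc, ← add_assoc, pow_succ', ← div_div, div_le_div_iff_of_pos_right (by positivity),
    div_le_iff₀ hβ0]
  linarith

end TailSum

lemma eq_zero_of_mul_eq_succ {β : ℝ} (hβ : 1 < β) {D : ℕ → ℝ} {M : ℝ} (hM : ∀ i, |D i| ≤ M)
    (hD : ∀ i, β * D i = D (i + 1)) (i : ℕ) : D i = 0 := by
  have hpow : ∀ k, β ^ k * |D i| = |D (i + k)| := by
    intro k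
    induction k with
    | zero => simp
    | succ k ih =>
      rw [pow_succ', mul_assoc, ih, ← add_assoc, ← hD, abs_mul, abs_of_pos (show 0 < β by linarith)]
  by_contra h
  obtain ⟨k, hk⟩ := pow_unbounded_of_one_lt (M / |D i|) hβ
  rw [div_lt_iff₀ (abs_pos.2 h), hpow] at hk
  linarith [hM (i + k)]

lemma eq_of_mul_eq_add {β : ℝ} (hβ : 1 < β) {c S T : ℕ → ℝ} {M N : ℝ}
    (hSM : ∀ i, S i ∈ Icc 0 M) (hTN : ∀ i, T i ∈ Icc 0 N)
    (hS : ∀ i, β * S i = c i + S (i + 1)) (hT : ∀ i, β * T i = c i + T (i + 1)) : S = T := by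
  funext i
  refine sub_eq_zero.1 (eq_zero_of_mul_eq_succ hβ (D := S - T) (M := M + N) (fun i ↦ ?_)
    (fun i ↦ ?_) i)
  · obtain ⟨hS0, hS1⟩ := hSM i
    obtain ⟨hT0, hT1⟩ := hTN i
    rw [Pi.sub_apply, abs_le]
    constructor <;> linarith
  · simp only [Pi.sub_apply]
    linarith [hS i, hT i]

lemma tailSum_dig {β x : ℝ} (hβ : 1 < β) (hx : x ∈ Icc 0 1) (i : ℕ) :
    tailSum β (dig β x) i = (tau β)^[i] x :=
  congrFun (eq_of_mul_eq_add hβ (tailSum_mem_Icc hβ (isDigitSeq_dig (by linarith) hx))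
    (iterate_tau_mem_Icc hx) (mul_tailSum hβ (isDigitSeq_dig (by linarith) hx))
    (mul_iterate_tau x)) i

section Quasigreedy
variable {β : ℝ}

lemma Lpt_spec (hs : IsSimpleBeta β) :
    1 ≤ Lpt β 1 ∧ ∃ k : ℕ, 1 ≤ k ∧ (k : ℤ) ≤ ⌊β⌋ ∧ (tau β)^[Lpt β 1 - 1] 1 = k / β :=
  Nat.sInf_mem hs

lemma isSimpleBeta_and_Lpt_le_of_iterate_eq_zero (hβ : 0 < β) {r : ℕ}
    (h : (tau β)^[r] 1 = 0) : IsSimpleBeta β ∧ Lpt β 1 ≤ r := by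
  induction r with
  | zero => simp at h
  | succ r ih =>
    -- `β τ^r 1` is an integer `K`: if `K = 0` then `τ^r 1 = 0`, otherwise `τ^r 1 = K / β`
    set y := (tau β)^[r] 1 with hy
    have hy01 := iterate_tau_mem_Icc (β := β) (x := 1) ⟨zero_le_one, le_rfl⟩ r
    rw [Function.iterate_succ_apply', ← hy, tau, sub_eq_zero] at h
    obtain hK | hK := (Int.floor_nonneg.2 (mul_nonneg hβ.le hy01.1)).eq_or_lt
    · rw [← hK, Int.cast_zero, mul_eq_zero] at h
      obtain ⟨hs, hL⟩ := ih (h.resolve_left hβ.ne')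
      exact ⟨hs, by omega⟩
    · obtain ⟨K, hKeq⟩ := Int.eq_ofNat_of_zero_le hK.le
      rw [hKeq] at h hK
      have hmem : 1 ≤ r + 1 ∧ ∃ k : ℕ, 1 ≤ k ∧ (k : ℤ) ≤ ⌊β⌋ ∧ (tau β)^[r + 1 - 1] 1 = k / β := by
        refine ⟨by omega, K, by omega, Int.le_floor.2 ?_, ?_⟩
        · push_cast at h ⊢
          rw [← h]
          exact mul_le_of_le_one_right hβ.le hy01.2
        · push_cast at h
          rw [Nat.add_sub_cancel, ← hy, eq_div_iff hβ.ne', ← h, mul_comm]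
      exact ⟨⟨r + 1, hmem⟩, Nat.sInf_le hmem⟩

lemma qdig_of_not_isSimpleBeta (hs : ¬ IsSimpleBeta β) : qdig β = dig β 1 := by
  funext n
  simp [qdig, hs]

lemma qdig_succ_of_isSimpleBeta (hs : IsSimpleBeta β) (j : ℕ) :
    qdig β (j + 1) = if j % Lpt β 1 = Lpt β 1 - 1 then dig β 1 (Lpt β 1) - 1
      else dig β 1 (j % Lpt β 1 + 1) := by
  simp [qdig, hs]

lemma isDigitSeq_qdig (hβ : 1 < β) : IsDigitSeq β (qdig β) := by
  have hβ0 : 0 < β := by linarith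
  have hd := isDigitSeq_dig hβ0.le (x := 1) ⟨zero_le_one, le_rfl⟩
  intro n hn
  by_cases hs : IsSimpleBeta β
  · obtain ⟨j, rfl⟩ : ∃ j, n = j + 1 := ⟨n - 1, by omega⟩
    obtain ⟨hL, k, hk1, hkβ, hτ⟩ := Lpt_spec hs
    rw [qdig_succ_of_isSimpleBeta hs]
    split_ifs
    · rw [dig_eq_of_iterate_eq_div hβ0.ne' hτ]
      omega
    · exact hd _ (by omega)
  · rw [qdig_of_not_isSimpleBeta hs]
    exact hd n hn

lemma tailSum_qdig_of_isSimpleBeta (hβ : 1 < β) (hs : IsSimpleBeta β) (i : ℕ) :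
    tailSum β (qdig β) i = (tau β)^[i % Lpt β 1] 1 := by
  have hβ0 : 0 < β := by linarith
  obtain ⟨hL, k, -, -, hτ⟩ := Lpt_spec hs
  refine congrFun (eq_of_mul_eq_add hβ (tailSum_mem_Icc hβ (isDigitSeq_qdig hβ))
    (fun j ↦ iterate_tau_mem_Icc ⟨zero_le_one, le_rfl⟩ (j % Lpt β 1))
    (mul_tailSum hβ (isDigitSeq_qdig hβ)) (fun j ↦ ?_)) i
  rw [qdig_succ_of_isSimpleBeta hs, ← Nat.mod_add_mod j (Lpt β 1) 1]
  -- at the end of a period the digit `k - 1` leaves the remainder `β (k / β) - (k - 1) = τ^0 1`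
  split_ifs with hj
  · rw [hj, Nat.sub_add_cancel hL, Nat.mod_self, dig_eq_of_iterate_eq_div hβ0.ne' hτ,
      Function.iterate_zero_apply, hτ]
    push_cast
    field_simp
    ring
  · have := Nat.mod_lt j (show 0 < Lpt β 1 by omega)
    rw [Nat.mod_eq_of_lt (a := j % Lpt β 1 + 1) (by omega)]
    exact mul_iterate_tau 1 _

lemma tailSum_qdig_zero (hβ : 1 < β) : tailSum β (qdig β) 0 = 1 := by
  by_cases hs : IsSimpleBeta β
  · rw [tailSum_qdig_of_isSimpleBeta hβ hs, Nat.zero_mod, Function.iterate_zero_apply]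
  · rw [qdig_of_not_isSimpleBeta hs, tailSum_dig hβ ⟨zero_le_one, le_rfl⟩,
      Function.iterate_zero_apply]

lemma tailSum_qdig_mem_Ioc (hβ : 1 < β) (i : ℕ) : tailSum β (qdig β) i ∈ Ioc 0 1 := by
  have hβ0 : 0 < β := by linarith
  have horbit (r : ℕ) := iterate_tau_mem_Icc (β := β) (x := 1) ⟨zero_le_one, le_rfl⟩ r
  by_cases hs : IsSimpleBeta β
  · have hlt := Nat.mod_lt i (Lpt_spec hs).1
    rw [tailSum_qdig_of_isSimpleBeta hβ hs]
    refine ⟨(horbit _).1.lt_of_ne' fun h ↦ ?_, (horbit _).2⟩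
    have := (isSimpleBeta_and_Lpt_le_of_iterate_eq_zero hβ0 h).2
    omega
  · rw [qdig_of_not_isSimpleBeta hs, tailSum_dig hβ ⟨zero_le_one, le_rfl⟩]
    exact ⟨(horbit i).1.lt_of_ne' fun h ↦ hs (isSimpleBeta_and_Lpt_le_of_iterate_eq_zero hβ0 h).1,
      (horbit i).2⟩

end Quasigreedy

def LexLT {α : Type*} [LT α] (a b : ℕ → α) : Prop :=
  ∃ m, 1 ≤ m ∧ (∀ n, 1 ≤ n → n < m → a n = b n) ∧ a m < b m

lemma eq_or_lexLT_or_lexLT {α : Type*} [LinearOrder α] (a b : ℕ → α) :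
    (∀ n, 1 ≤ n → a n = b n) ∨ LexLT a b ∨ LexLT b a := by
  classical
  by_cases h : ∃ n, 1 ≤ n ∧ a n ≠ b n
  · have hagree : ∀ n, 1 ≤ n → n < Nat.find h → a n = b n := fun n h1 h2 ↦
      not_not.1 fun hne ↦ Nat.find_min h h2 ⟨h1, hne⟩
    obtain ⟨hm, hne⟩ := Nat.find_spec h
    obtain hlt | hgt := hne.lt_or_gt
    · exact Or.inr (Or.inl ⟨Nat.find h, hm, hagree, hlt⟩)
    · exact Or.inr (Or.inr ⟨Nat.find h, hm, fun n h1 h2 ↦ (hagree n h1 h2).symm, hgt⟩)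
  · push Not at h
    exact Or.inl h

lemma lt_zero_of_forall_lt_div_pow {β : ℝ} (hβ : 1 < β) {g : ℕ → ℝ} (hg : BddAbove (range g))
    (h : ∀ i, ∃ j m, 1 ≤ m ∧ g i < g j / β ^ m) (i : ℕ) : g i < 0 := by
  have hβ0 : 0 < β := by linarith
  have hsup : ⨆ j, g j ≤ 0 := by
    by_contra! hpos
    have hle : ⨆ j, g j ≤ (⨆ j, g j) / β := ciSup_le fun i ↦ by
      obtain ⟨j, m, hm, hij⟩ := h i
      calc g i ≤ g j / β ^ m := hij.le
        _ ≤ (⨆ j, g j) / β ^ m := by gcongr; exact le_ciSup hg j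
        _ ≤ (⨆ j, g j) / β :=
          div_le_div_of_nonneg_left hpos.le hβ0 (le_self_pow₀ hβ.le (by omega))
    rw [le_div_iff₀ hβ0] at hle
    nlinarith
  obtain ⟨j, m, -, hij⟩ := h i
  exact hij.trans_le (div_nonpos_of_nonpos_of_nonneg ((le_ciSup hg j).trans hsup) (by positivity))

section Realization
variable {β : ℝ} {t : ℕ → ℝ} {c : ℕ → ℤ}

lemma floor_mul_eq_of_mul_eq_add (ht : ∀ i, t i ∈ Ico 0 1)
    (hrec : ∀ i, β * t i = c i + t (i + 1)) (i : ℕ) : ⌊β * t i⌋ = c i := by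
  rw [hrec, Int.floor_intCast_add, Int.floor_eq_zero_iff.2 (ht (i + 1)), add_zero]

lemma iterate_tau_eq_of_mul_eq_add (ht : ∀ i, t i ∈ Ico 0 1)
    (hrec : ∀ i, β * t i = c i + t (i + 1)) (i : ℕ) : (tau β)^[i] (t 0) = t i := by
  induction i with
  | zero => rfl
  | succ i ih =>
    rw [Function.iterate_succ_apply', ih, tau, floor_mul_eq_of_mul_eq_add ht hrec, hrec]
    ring

lemma dig_eq_of_mul_eq_add (ht : ∀ i, t i ∈ Ico 0 1)
    (hrec : ∀ i, β * t i = c i + t (i + 1)) (i : ℕ) : dig β (t 0) (i + 1) = c i := by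
  rw [dig, Nat.add_sub_cancel, iterate_tau_eq_of_mul_eq_add ht hrec,
    floor_mul_eq_of_mul_eq_add ht hrec]

end Realization

section Main
variable {β : ℝ}

lemma dig_shift_lexLT_qdig (hβ : 1 < β) {x : ℝ} (hx : x ∈ Ico 0 1) (i : ℕ) :
    LexLT (fun n ↦ dig β x (i + n)) (qdig β) := by
  have hβ0 : 0 < β := by linarith
  have hx' := Ico_subset_Icc_self hx
  have hu := isDigitSeq_dig (by linarith) hx'
  have hv := isDigitSeq_qdig hβ
  have htail : tailSum β (dig β x) i < tailSum β (qdig β) 0 := by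
    rw [tailSum_dig hβ hx', tailSum_qdig_zero hβ]
    exact iterate_tau_lt_one hx.2 i
  obtain heq | hlt | ⟨m, hm, hagree, hgt⟩ :=
    eq_or_lexLT_or_lexLT (fun n ↦ dig β x (i + n)) (qdig β)
  · exact absurd (tailSum_congr (j := 0) (by simpa using heq)) htail.ne
  · exact hlt
  exfalso
  have hcmp := div_pow_le_tailSum_sub_of_lt hβ hv hu (i := 0) hm
    (by simpa using hagree) (by simpa using hgt)
  rw [zero_add] at hcmp
  have hnonneg : 0 ≤ (1 + tailSum β (dig β x) (i + m) - tailSum β (qdig β) m) / β ^ m :=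
    div_nonneg (by linarith [(tailSum_mem_Icc hβ hu (i + m)).1, (tailSum_qdig_mem_Ioc hβ m).2])
      (by positivity)
  linarith

lemma exists_dig_eq_of_shift_lexLT_qdig (hβ : 1 < β) {w : ℕ → ℤ} (hw : IsDigitSeq β w)
    (H : ∀ i, LexLT (fun n ↦ w (i + n)) (qdig β)) :
    ∃ x ∈ Ico 0 1, ∀ n, 1 ≤ n → w n = dig β x n := by
  have hβ0 : 0 < β := by linarith
  have hbdd : BddAbove (range fun i ↦ tailSum β w i - 1) :=
    ⟨(1 - β⁻¹)⁻¹ - 1, forall_mem_range.2 fun i ↦ by linarith [(tailSum_mem_Icc hβ hw i).2]⟩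
  have hcontract : ∀ i, ∃ j m, 1 ≤ m ∧ tailSum β w i - 1 < (tailSum β w j - 1) / β ^ m := by
    intro i
    obtain ⟨m, hm, hagree, hltm⟩ := H i
    have hcmp := div_pow_le_tailSum_sub_of_lt hβ hw (isDigitSeq_qdig hβ) (j := 0) hm
      (by simpa using hagree) (by simpa using hltm)
    rw [zero_add, tailSum_qdig_zero hβ, div_le_iff₀ (by positivity)] at hcmp
    refine ⟨i + m, m, hm, ?_⟩
    rw [lt_div_iff₀ (by positivity)]
    linarith [(tailSum_qdig_mem_Ioc hβ m).1]
  have ht (i : ℕ) : tailSum β w i ∈ Ico 0 1 :=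
    ⟨(tailSum_mem_Icc hβ hw i).1, sub_neg.1 (lt_zero_of_forall_lt_div_pow hβ hbdd hcontract i)⟩
  refine ⟨tailSum β w 0, ht 0, fun n hn ↦ ?_⟩
  obtain ⟨i, rfl⟩ : ∃ i, n = i + 1 := ⟨n - 1, by omega⟩
  exact (dig_eq_of_mul_eq_add ht (mul_tailSum hβ hw) i).symm

end Main

theorem stmt19_general (β : ℝ) (hβ : 1 < β)
    (w : ℕ → ℤ) (hw : ∀ n : ℕ, 1 ≤ n → 0 ≤ w n ∧ w n ≤ ⌊β⌋) :
    (∃ x₀ : ℝ, 0 ≤ x₀ ∧ x₀ < 1 ∧ ∀ n : ℕ, 1 ≤ n → w n = dig β x₀ n) ↔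
    (∀ i : ℕ, ∃ m : ℕ, 1 ≤ m ∧
      (∀ n : ℕ, 1 ≤ n → n < m → w (i + n) = qdig β n) ∧ w (i + m) < qdig β m) := by
  constructor
  · rintro ⟨x₀, hx₀, hx₁, hwx⟩ i
    obtain ⟨m, hm, hagree, hlt⟩ := dig_shift_lexLT_qdig hβ ⟨hx₀, hx₁⟩ i
    refine ⟨m, hm, fun n h1 h2 ↦ ?_, ?_⟩
    · rw [hwx _ (by omega)]
      exact hagree n h1 h2
    · rw [hwx _ (by omega)]
      exact hlt
  · intro H
    obtain ⟨x₀, hx₀, hwx⟩ := exists_dig_eq_of_shift_lexLT_qdig hβ hw H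
    exact ⟨x₀, hx₀.1, hx₀.2, hwx⟩

theorem stmt19 (β : ℝ) (hβ : 1 < β) (hnonint : ∀ k : ℤ, β ≠ (k : ℝ))
    (w : ℕ → ℤ) (hw : ∀ n : ℕ, 1 ≤ n → 0 ≤ w n ∧ w n ≤ ⌊β⌋) :
    (∃ x₀ : ℝ, 0 ≤ x₀ ∧ x₀ < 1 ∧ ∀ n : ℕ, 1 ≤ n → w n = dig β x₀ n) ↔
    (∀ i : ℕ, ∃ m : ℕ, 1 ≤ m ∧
      (∀ n : ℕ, 1 ≤ n → n < m → w (i + n) = qdig β n) ∧ w (i + m) < qdig β m) :=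
  stmt19_general β hβ w hw
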